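/- Define π^{(1)}_{(i;m)} = Σ_{l=0}^{i-1} (1/2)^{2l+m} C(l+m-1, l). Then for every fixed positive integer m, as i → ∞, π^{(1)}_{(i;m)} = 1 - C_m/√i + o(1/√i) for some constant C_m > 0 depending only on m; in particular π^{(1)}_{(i;m)} → 1 and the tail 1 - π^{(1)}_{(i;m)} is bounded above by m·i^{-1/2} and below by a positive constant (depending on m) times i^{-1/2}. -/

import Mathlib

open Filter

/-- The Catalan triangle entry `C(n,k) = (n+k)! (n-k+1) / (k! (n+1)!)`, as a real number. -/
noncomputable def catalanTriangle (n k : ℕ) : ℝ :=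
  ((n + k).factorial * (n - k + 1) : ℕ) / ((k.factorial * (n + 1).factorial : ℕ) : ℝ)

/-- `π^{(1)}_{(i;m)} = ∑_{l=0}^{i-1} (1/2)^(2l+m) C(l+m-1,l)`. -/
noncomputable def piOne (i m : ℕ) : ℝ :=
  ∑ l ∈ Finset.range i, (1 / 2 : ℝ) ^ (2 * l + m) * catalanTriangle (l + m - 1) l

/-!
Write `n = 2k + m`. Each Catalan-triangle term is a difference of two binomial coefficients, and
Pascal's rule together with the symmetry `C(n, k + m) = C(n, k)` makes the partial sums
telescope: `1 - π^{(1)}_{(k+1;m)} = 2^{-n} ∑_{j<m} C(n, k+1+j)`, the mass that a fair binomial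
law on `n` trials puts on the `m` central values `k+1, …, k+m`. Each of these `m` probabilities is
within a bounded factor of `C(2k+1, k)/2^(2k+1) = C(2k+2, k+1)/4^(k+1)`, and their ratios to it
tend to `1`. Stirling's formula gives `√n · C(2n, n)/4^n → 1/√π`, so the tail is
`m/√(π i) + o(1/√i)`; the monotonicity of the Stirling sequence gives the two-sided bounds.
-/

open Real Finset Topology Stirling

theorem catalanTriangle_zero_right (n : ℕ) : catalanTriangle n 0 = 1 := by
  simp only [catalanTriangle, Nat.add_zero, Nat.sub_zero, Nat.factorial_zero, Nat.factorial_succ]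
  push_cast
  field_simp

-- At `k = n` the truncated subtraction `n - (n + 1) + 1 = 1` makes the left side junk.
theorem catalanTriangle_succ_eq_choose_sub_choose {n k : ℕ} (h : k < n) :
    catalanTriangle n (k + 1) = ((n + k + 1).choose (k + 1) : ℝ) - (n + k + 1).choose k := by
  obtain ⟨d, rfl⟩ : ∃ d, n = k + 1 + d := ⟨n - (k + 1), by omega⟩
  rw [catalanTriangle, Nat.cast_choose ℝ (by omega : k + 1 ≤ k + 1 + d + k + 1),
    Nat.cast_choose ℝ (by omega : k ≤ k + 1 + d + k + 1),
    show k + 1 + d + k + 1 - (k + 1) = k + 1 + d by omega,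
    show k + 1 + d + k + 1 - k = k + 1 + d + 1 by omega,
    show k + 1 + d - (k + 1) + 1 = d + 1 by omega,
    show k + 1 + d + (k + 1) = k + 1 + d + k + 1 by omega]
  rw [Nat.factorial_succ (k + 1 + d), Nat.factorial_succ k]
  push_cast
  field_simp
  ring

theorem sum_choose_add_two (n k m : ℕ) :
    ∑ j ∈ range m, (n + 2).choose (k + 2 + j) + n.choose (k + m) + n.choose (k + 1) =
      4 * ∑ j ∈ range m, n.choose (k + 1 + j) + n.choose k + n.choose (k + 1 + m) := by
  induction m with
  | zero => simp [Nat.add_comm]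
  | succ m ih =>
    have pascal₂ : (n + 2).choose (k + m + 2) =
        n.choose (k + m) + 2 * n.choose (k + m + 1) + n.choose (k + m + 2) := by
      rw [Nat.choose_succ_succ' (n + 1), Nat.choose_succ_succ' n, Nat.choose_succ_succ' n]
      ring_nf
    rw [sum_range_succ, sum_range_succ]
    rw [show k + 2 + m = k + m + 2 by ring, show k + (m + 1) = k + m + 1 by ring,
      show k + 1 + (m + 1) = k + m + 2 by ring]
    rw [show k + 1 + m = k + m + 1 by ring] at ih ⊢
    linarith

theorem sum_choose_middle_window_succ (k m : ℕ) :
    ∑ j ∈ range m, (2 * k + m + 2).choose (k + 2 + j) + (2 * k + m + 1).choose (k + 1) =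
      4 * ∑ j ∈ range m, (2 * k + m).choose (k + 1 + j) + (2 * k + m + 1).choose k := by
  have symm : (2 * k + m).choose (k + m) = (2 * k + m).choose k := by
    simpa [show 2 * k + m - k = k + m by omega] using
      Nat.choose_symm (n := 2 * k + m) (k := k) (by omega)
  have lower :
      (2 * k + m + 1).choose k = (2 * k + m).choose k + (2 * k + m).choose (k + 1 + m) := by
    rw [← Nat.choose_symm (by omega), show 2 * k + m + 1 - k = k + m + 1 by omega,
      Nat.choose_succ_succ', ← symm, add_right_comm]
  have upper := Nat.choose_succ_succ' (2 * k + m) k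
  linarith [sum_choose_add_two (2 * k + m) k m]

noncomputable def middleBinomialMass (k m : ℕ) : ℝ :=
  (∑ j ∈ range m, ((2 * k + m).choose (k + 1 + j) : ℝ)) / 2 ^ (2 * k + m)

theorem middleBinomialMass_sub_succ {m : ℕ} (hm : 1 ≤ m) (k : ℕ) :
    middleBinomialMass k m - middleBinomialMass (k + 1) m =
      (1 / 2) ^ (2 * (k + 1) + m) * catalanTriangle (k + 1 + m - 1) (k + 1) := by
  have step := congrArg (Nat.cast : ℕ → ℝ) (sum_choose_middle_window_succ k m)
  push_cast at step
  rw [show k + 1 + m - 1 = k + m by omega,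
    catalanTriangle_succ_eq_choose_sub_choose (by omega),
    show k + m + k + 1 = 2 * k + m + 1 by ring]
  simp only [middleBinomialMass, show 2 * (k + 1) + m = 2 * k + m + 2 by ring,
    show ∀ j, k + 1 + 1 + j = k + 2 + j by omega]
  rw [one_div_pow, show (2 : ℝ) ^ (2 * k + m + 2) = 2 ^ (2 * k + m) * 4 by ring]
  field_simp
  linear_combination -step

theorem middleBinomialMass_zero_left (m : ℕ) : middleBinomialMass 0 m = 1 - (1 / 2) ^ m := by
  have h := sum_range_succ' (fun j => (m.choose j : ℝ)) m
  rw [← Nat.cast_sum, Nat.sum_range_choose] at h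
  simp only [middleBinomialMass, mul_zero, zero_add, add_comm 1]
  push_cast [Nat.choose_zero_right] at h
  rw [div_pow, one_pow, eq_sub_iff_add_eq, ← add_div, div_eq_one_iff_eq (by positivity)]
  linarith

theorem piOne_succ {m : ℕ} (hm : 1 ≤ m) (k : ℕ) :
    piOne (k + 1) m = 1 - middleBinomialMass k m := by
  induction k with
  | zero =>
    rw [middleBinomialMass_zero_left, piOne, sum_range_one, catalanTriangle_zero_right]
    ring
  | succ k ih =>
    rw [piOne, sum_range_succ, ← piOne, ih, ← middleBinomialMass_sub_succ hm]
    ring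

theorem choose_le_two_pow_mul_choose_half (n d r : ℕ) :
    (n + d).choose r ≤ 2 ^ d * n.choose (n / 2) := by
  induction d generalizing r with
  | zero => simpa using Nat.choose_le_middle r n
  | succ d ih =>
    rcases r with _ | r
    · simpa using Nat.one_le_two_pow.trans (Nat.le_mul_of_pos_right _ (Nat.choose_pos (by omega)))
    · rw [← add_assoc, Nat.choose_succ_succ', pow_succ]
      linarith [ih r, ih (r + 1)]

theorem centralBinom_succ_div_four_pow (k : ℕ) :
    (Nat.centralBinom (k + 1) : ℝ) / 4 ^ (k + 1) = (2 * k + 1).choose k / 2 ^ (2 * k + 1) := by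
  have h : Nat.centralBinom (k + 1) = 2 * (2 * k + 1).choose k := by
    rw [Nat.centralBinom, show 2 * (k + 1) = 2 * k + 1 + 1 by ring, Nat.choose_succ_succ',
      Nat.choose_symm_half]
    ring
  rw [h, show (4 : ℝ) ^ (k + 1) = 2 ^ (2 * k + 1) * 2 by
    rw [← pow_succ, show 2 * k + 1 + 1 = 2 * (k + 1) by ring, pow_mul]; norm_num]
  push_cast
  field_simp

theorem middleBinomialMass_le {m : ℕ} (hm : 1 ≤ m) (k : ℕ) :
    middleBinomialMass k m ≤ m * (Nat.centralBinom (k + 1) / 4 ^ (k + 1)) := by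
  obtain ⟨d, rfl⟩ : ∃ d, m = d + 1 := ⟨m - 1, by omega⟩
  have term_le (j : ℕ) :
      ((2 * k + (d + 1)).choose (k + 1 + j) : ℝ) ≤ 2 ^ d * (2 * k + 1).choose k := by
    have := choose_le_two_pow_mul_choose_half (2 * k + 1) d (k + 1 + j)
    rw [show (2 * k + 1) / 2 = k by omega, show 2 * k + 1 + d = 2 * k + (d + 1) by ring] at this
    exact_mod_cast this
  rw [centralBinom_succ_div_four_pow, middleBinomialMass, div_le_iff₀ (by positivity)]
  calc ∑ j ∈ range (d + 1), ((2 * k + (d + 1)).choose (k + 1 + j) : ℝ)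
      ≤ ∑ _j ∈ range (d + 1), 2 ^ d * ((2 * k + 1).choose k : ℝ) :=
        sum_le_sum fun j _ => term_le j
    _ = _ := by
      rw [sum_const, card_range, nsmul_eq_mul, show 2 * k + (d + 1) = 2 * k + 1 + d by ring,
        pow_add]
      push_cast
      field_simp
      ring

theorem middleBinomialMass_ge {m : ℕ} (hm : 1 ≤ m) (k : ℕ) :
    2 / 2 ^ m * (Nat.centralBinom (k + 1) / 4 ^ (k + 1) : ℝ) ≤ middleBinomialMass k m := by
  have last_term : (2 * k + 1).choose k ≤ (2 * k + m).choose (k + 1 + (m - 1)) := by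
    rw [show k + 1 + (m - 1) = k + m by omega, show k + m = 2 * k + m - k by omega,
      Nat.choose_symm (by omega)]
    exact Nat.choose_le_choose _ (by omega)
  have hsum :
      ((2 * k + 1).choose k : ℝ) ≤ ∑ j ∈ range m, ((2 * k + m).choose (k + 1 + j) : ℝ) :=
    (Nat.cast_le.mpr last_term).trans
      (single_le_sum (f := fun j => ((2 * k + m).choose (k + 1 + j) : ℝ))
        (fun _ _ => Nat.cast_nonneg _) (mem_range.mpr (by omega)))
  calc 2 / 2 ^ m * (Nat.centralBinom (k + 1) / 4 ^ (k + 1) : ℝ)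
      = (2 * k + 1).choose k / 2 ^ (2 * k + m) := by
        rw [centralBinom_succ_div_four_pow, pow_add, pow_succ]
        field_simp
        ring
    _ ≤ middleBinomialMass k m := by
        rw [middleBinomialMass]
        gcongr

theorem sqrt_mul_centralBinom_div_four_pow {n : ℕ} (hn : n ≠ 0) :
    √n * Nat.centralBinom n / 4 ^ n = stirlingSeq (2 * n) / stirlingSeq n ^ 2 := by
  have four_pow : ((2 : ℝ) * n / exp 1) ^ (2 * n) = 4 ^ n * ((n / exp 1) ^ n) ^ 2 := by
    rw [mul_div_assoc, mul_pow, pow_mul (2 : ℝ), mul_comm 2 n, pow_mul]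
    norm_num
  have sqrt_four : √(2 * (2 * n : ℝ)) = 2 * √n := by
    rw [show (2 : ℝ) * (2 * n) = 2 ^ 2 * n by ring, sqrt_mul (by positivity), sqrt_sq zero_le_two]
  have sqrt_two_sq : √(2 : ℝ) ^ 2 = 2 := sq_sqrt zero_le_two
  rw [stirlingSeq, stirlingSeq, Nat.centralBinom, Nat.cast_choose ℝ (by omega : n ≤ 2 * n),
    show 2 * n - n = n by omega]
  push_cast
  rw [four_pow, sqrt_four, sqrt_mul zero_le_two]
  field_simp
  rw [sqrt_two_sq]

theorem tendsto_sqrt_mul_centralBinom_div_four_pow :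
    Tendsto (fun n : ℕ => √n * Nat.centralBinom n / 4 ^ n) atTop (𝓝 (1 / √π)) := by
  have two_mul_atTop : Tendsto (fun n : ℕ => 2 * n) atTop atTop :=
    tendsto_id.const_mul_atTop' two_pos
  have h := (tendsto_stirlingSeq_sqrt_pi.comp two_mul_atTop).div
    (tendsto_stirlingSeq_sqrt_pi.pow 2) (by positivity)
  rw [show √π / √π ^ 2 = 1 / √π by field_simp] at h
  refine h.congr' ?_
  filter_upwards [eventually_ne_atTop 0] with n hn
  exact (sqrt_mul_centralBinom_div_four_pow hn).symm

theorem stirlingSeq_le_of_le {m n : ℕ} (hm : m ≠ 0) (hmn : m ≤ n) :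
    stirlingSeq n ≤ stirlingSeq m := by
  obtain ⟨m, rfl⟩ := Nat.exists_eq_succ_of_ne_zero hm
  obtain ⟨n, rfl⟩ : ∃ n', n = n' + 1 := ⟨n - 1, by omega⟩
  exact stirlingSeq'_antitone (Nat.le_of_succ_le_succ hmn)

theorem sqrt_mul_centralBinom_div_four_pow_le (n : ℕ) :
    √n * Nat.centralBinom n / 4 ^ n ≤ 1 / √π := by
  rcases eq_or_ne n 0 with rfl | hn
  · simp
  have hπ := sqrt_pi_le_stirlingSeq hn
  have hpos : 0 < stirlingSeq n := (sqrt_pos.2 pi_pos).trans_le hπ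
  rw [sqrt_mul_centralBinom_div_four_pow hn]
  calc stirlingSeq (2 * n) / stirlingSeq n ^ 2 ≤ stirlingSeq n / stirlingSeq n ^ 2 := by
        gcongr
        exact stirlingSeq_le_of_le hn (by omega)
    _ = 1 / stirlingSeq n := by field_simp
    _ ≤ 1 / √π := by gcongr

theorem two_mul_sqrt_pi_div_exp_sq_le_sqrt_mul_centralBinom_div_four_pow {n : ℕ} (hn : n ≠ 0) :
    2 * √π / exp 1 ^ 2 ≤ √n * Nat.centralBinom n / 4 ^ n := by
  have hpos : 0 < stirlingSeq n := (sqrt_pos.2 pi_pos).trans_le (sqrt_pi_le_stirlingSeq hn)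
  rw [sqrt_mul_centralBinom_div_four_pow hn]
  calc 2 * √π / exp 1 ^ 2 = √π / stirlingSeq 1 ^ 2 := by
        rw [stirlingSeq_one, div_pow, sq_sqrt zero_le_two]; field_simp
    _ ≤ stirlingSeq (2 * n) / stirlingSeq n ^ 2 := by
        have hπ : √π ≤ stirlingSeq (2 * n) := sqrt_pi_le_stirlingSeq (by omega)
        have hs : stirlingSeq n ≤ stirlingSeq 1 := stirlingSeq_le_of_le one_ne_zero (by omega)
        gcongr
        exact (sqrt_nonneg π).trans hπ

noncomputable def scaledChoose (a b k : ℕ) : ℝ :=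
  √(k + 1) * (2 * k + 1 + a).choose (k + b) / 2 ^ (2 * k + 1 + a)

theorem tendsto_scaledChoose_zero_zero : Tendsto (scaledChoose 0 0) atTop (𝓝 (1 / √π)) := by
  refine ((tendsto_add_atTop_iff_nat 1).mpr tendsto_sqrt_mul_centralBinom_div_four_pow).congr
    fun k => ?_
  rw [scaledChoose, mul_div_assoc, mul_div_assoc, centralBinom_succ_div_four_pow]
  push_cast
  rfl

theorem scaledChoose_succ_right (a b : ℕ) {k : ℕ} (hk : b ≤ k) :
    scaledChoose a (b + 1) k = scaledChoose a b k * ((1 + a - b + k) / (b + 1 + k)) := by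
  have h := Nat.choose_succ_right_eq (2 * k + 1 + a) (k + b)
  rw [show 2 * k + 1 + a - (k + b) = k + 1 + a - b by omega] at h
  have h' := congrArg (Nat.cast : ℕ → ℝ) h
  push_cast [show b ≤ k + 1 + a by omega] at h'
  have choose_succ : ((2 * k + 1 + a).choose (k + (b + 1)) : ℝ) =
      (2 * k + 1 + a).choose (k + b) * (1 + a - b + k) / (b + 1 + k) := by
    rw [eq_div_iff (by positivity), ← add_assoc]
    linear_combination h'
  rw [scaledChoose, scaledChoose, choose_succ]
  ring

theorem scaledChoose_succ_left (a b : ℕ) {k : ℕ} (hk : b ≤ k) :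
    scaledChoose (a + 1) b k =
      scaledChoose a b k * ((2 + a + 2 * k) / (2 * (2 + a - b) + 2 * k)) := by
  have h := Nat.choose_mul_succ_eq (2 * k + 1 + a) (k + b)
  rw [show 2 * k + 1 + a + 1 - (k + b) = k + 2 + a - b by omega] at h
  have h' := congrArg (Nat.cast : ℕ → ℝ) h
  push_cast [show b ≤ k + 2 + a by omega] at h'
  have hpos : (0 : ℝ) < k + 2 + a - b := by
    have : (b : ℝ) ≤ k := by exact_mod_cast hk
    linarith
  have choose_succ : ((2 * k + 1 + (a + 1)).choose (k + b) : ℝ) =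
      (2 * k + 1 + a).choose (k + b) * (2 + a + 2 * k) / (k + 2 + a - b) := by
    rw [eq_div_iff hpos.ne', ← add_assoc]
    linear_combination -h'
  have hden : (2 * (2 + a - b) + 2 * k : ℝ) = 2 * (k + 2 + a - b) := by ring
  rw [scaledChoose, scaledChoose, choose_succ, ← add_assoc, pow_succ, hden]
  field_simp

theorem tendsto_scaledChoose_zero_right (a : ℕ) :
    Tendsto (scaledChoose a 0) atTop (𝓝 (1 / √π)) := by
  induction a with
  | zero => exact tendsto_scaledChoose_zero_zero
  | succ a ih =>
    have h := ih.mul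
      (tendsto_add_mul_div_add_mul_atTop_nhds (2 + a : ℝ) (2 * (2 + a)) 2 two_ne_zero)
    rw [div_self two_ne_zero, mul_one] at h
    refine h.congr' ?_
    filter_upwards with k
    rw [scaledChoose_succ_left a 0 k.zero_le, Nat.cast_zero, sub_zero]

theorem tendsto_scaledChoose (a b : ℕ) : Tendsto (scaledChoose a b) atTop (𝓝 (1 / √π)) := by
  induction b with
  | zero => exact tendsto_scaledChoose_zero_right a
  | succ b ih =>
    have h := ih.mul
      (tendsto_add_mul_div_add_mul_atTop_nhds (1 + a - b : ℝ) (b + 1) 1 one_ne_zero)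
    simp only [one_mul, div_one, mul_one] at h
    refine h.congr' ?_
    filter_upwards [eventually_ge_atTop b] with k hk
    rw [scaledChoose_succ_right a b hk]

theorem middleBinomialMass_mul_sqrt_le {m : ℕ} (hm : 1 ≤ m) (k : ℕ) :
    middleBinomialMass k m * √(k + 1) ≤ m := by
  have hb := sqrt_mul_centralBinom_div_four_pow_le (k + 1)
  have hπ : 1 ≤ √π := Real.one_le_sqrt.mpr (by linarith [pi_gt_three])
  push_cast at hb
  calc middleBinomialMass k m * √(k + 1)
      ≤ m * (Nat.centralBinom (k + 1) / 4 ^ (k + 1)) * √(k + 1) := by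
        gcongr; exact middleBinomialMass_le hm k
    _ = m * (√(k + 1) * Nat.centralBinom (k + 1) / 4 ^ (k + 1)) := by ring
    _ ≤ m * 1 := by
        gcongr
        exact hb.trans (div_le_one_of_le₀ hπ (sqrt_nonneg π))
    _ = m := mul_one _

theorem le_middleBinomialMass_mul_sqrt {m : ℕ} (hm : 1 ≤ m) (k : ℕ) :
    4 * √π / (2 ^ m * exp 1 ^ 2) ≤ middleBinomialMass k m * √(k + 1) := by
  have hb := two_mul_sqrt_pi_div_exp_sq_le_sqrt_mul_centralBinom_div_four_pow k.succ_ne_zero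
  push_cast at hb
  calc 4 * √π / (2 ^ m * exp 1 ^ 2) = 2 / 2 ^ m * (2 * √π / exp 1 ^ 2) := by ring
    _ ≤ 2 / 2 ^ m * (√(k + 1) * Nat.centralBinom (k + 1) / 4 ^ (k + 1)) := by gcongr
    _ = 2 / 2 ^ m * (Nat.centralBinom (k + 1) / 4 ^ (k + 1)) * √(k + 1) := by ring
    _ ≤ middleBinomialMass k m * √(k + 1) := by gcongr; exact middleBinomialMass_ge hm k

theorem tendsto_middleBinomialMass_mul_sqrt {m : ℕ} (hm : 1 ≤ m) :
    Tendsto (fun k => middleBinomialMass k m * √(k + 1)) atTop (𝓝 (m / √π)) := by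
  have h := tendsto_finsetSum (range m) fun j _ => tendsto_scaledChoose (m - 1) (1 + j)
  rw [sum_const, card_range, nsmul_eq_mul, ← mul_div_assoc, mul_one] at h
  refine h.congr fun k => ?_
  rw [middleBinomialMass, sum_div, sum_mul]
  refine sum_congr rfl fun j _ => ?_
  rw [scaledChoose, show 2 * k + 1 + (m - 1) = 2 * k + m by omega,
    show k + (1 + j) = k + 1 + j by ring]
  ring

theorem tendsto_one_div_sqrt_natCast_atTop :
    Tendsto (fun i : ℕ => 1 / √(i : ℝ)) atTop (𝓝 0) := by
  simpa only [one_div, Function.comp_def] using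
    tendsto_inv_atTop_zero.comp (tendsto_sqrt_atTop.comp tendsto_natCast_atTop_atTop)

theorem eventually_eq_mul_sqrt_mul_one_div_sqrt (t : ℕ → ℝ) :
    t =ᶠ[atTop] fun i : ℕ => t i * √i * (1 / √i) := by
  filter_upwards [eventually_ge_atTop 1] with i hi
  have : 0 < √(i : ℝ) := sqrt_pos.mpr (by exact_mod_cast hi)
  field_simp

theorem isLittleO_of_tendsto_mul_sqrt {t : ℕ → ℝ} {C : ℝ}
    (h : Tendsto (fun i : ℕ => t i * √i) atTop (𝓝 C)) :
    (fun i : ℕ => C / √i - t i) =o[atTop] (fun i : ℕ => 1 / √i) := by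
  have small : (fun i : ℕ => C - t i * √i) =o[atTop] (fun _ => (1 : ℝ)) :=
    (Asymptotics.isLittleO_one_iff ℝ).mpr (by simpa using (tendsto_const_nhds (x := C)).sub h)
  refine (small.mul_isBigO (Asymptotics.isBigO_refl (fun i : ℕ => 1 / √(i : ℝ)) atTop)).congr'
    ?_ (by simp)
  filter_upwards [eventually_eq_mul_sqrt_mul_one_div_sqrt t] with i hi
  linear_combination hi

theorem tendsto_zero_of_tendsto_mul_sqrt {t : ℕ → ℝ} {C : ℝ}
    (h : Tendsto (fun i : ℕ => t i * √i) atTop (𝓝 C)) : Tendsto t atTop (𝓝 0) := by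
  have := h.mul tendsto_one_div_sqrt_natCast_atTop
  rw [mul_zero] at this
  exact this.congr' (eventually_eq_mul_sqrt_mul_one_div_sqrt t).symm

/-- For every fixed `m ≥ 1`: `π^{(1)}_{(i;m)} = 1 - C_m/√i + o(1/√i)` for some constant
`C_m > 0`; in particular `π^{(1)}_{(i;m)} → 1`, and the tail `1 - π^{(1)}_{(i;m)}` is at most
`m·i^{-1/2}` and at least a positive constant times `i^{-1/2}`. -/
theorem piOne_asymptotics (m : ℕ) (hm : 1 ≤ m) :
    ∃ C : ℝ, 0 < C ∧
      (fun i : ℕ => piOne i m - (1 - C / Real.sqrt i)) =o[atTop] (fun i : ℕ => 1 / Real.sqrt i) ∧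
      Tendsto (fun i : ℕ => piOne i m) atTop (nhds 1) ∧
      (∀ i : ℕ, 1 ≤ i → 1 - piOne i m ≤ (m : ℝ) / Real.sqrt i) ∧
      (∃ c : ℝ, 0 < c ∧ ∀ i : ℕ, 1 ≤ i → c / Real.sqrt i ≤ 1 - piOne i m) := by
  have tail_succ (k : ℕ) :
      (1 - piOne (k + 1) m) * √(k + 1 : ℕ) = middleBinomialMass k m * √(k + 1) := by
    rw [piOne_succ hm]; push_cast; ring
  have hlim : Tendsto (fun i : ℕ => (1 - piOne i m) * √i) atTop (𝓝 (m / √π)) :=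
    (tendsto_add_atTop_iff_nat 1).mp
      ((tendsto_middleBinomialMass_mul_sqrt hm).congr fun k => (tail_succ k).symm)
  refine ⟨m / √π, by positivity, ?_, ?_, fun i hi => ?_,
    ⟨4 * √π / (2 ^ m * exp 1 ^ 2), by positivity, fun i hi => ?_⟩⟩
  · exact (isLittleO_of_tendsto_mul_sqrt hlim).congr_left fun i => by ring
  · simpa using (tendsto_const_nhds (x := (1 : ℝ))).sub (tendsto_zero_of_tendsto_mul_sqrt hlim)
  all_goals
    obtain ⟨k, rfl⟩ := Nat.exists_eq_add_of_le' hi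
    have hsqrt : 0 < √((k + 1 : ℕ) : ℝ) := sqrt_pos.mpr (by positivity)
  · rw [le_div_iff₀ hsqrt, tail_succ]
    exact middleBinomialMass_mul_sqrt_le hm k
  · rw [div_le_iff₀ hsqrt, tail_succ]
    exact le_middleBinomialMass_mul_sqrt hm k
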